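/- Let Ω be a bounded domain in ℂⁿ with the property that k_z → 0 weakly as z → bΩ and the Berezin boundary-limit property lim_{z→p} ψ̃(z) = ψ(p) holds for all ψ ∈ C(Ω̄) at every point p in a dense subset Γ of bΩ. Then for ψ ∈ C(Ω̄): ‖T_ψ‖_e ≥ sup{|ψ(p)| : p ∈ bΩ}. -/
import Mathlib


open scoped InnerProductSpace Topology

/-- The essential norm `‖T‖_e = inf {‖T − S‖ : S compact}` of a bounded operator. -/
noncomputable def essNorm {A : Type*} [NormedAddCommGroup A] [NormedSpace ℂ A]
    (T : A →L[ℂ] A) : ℝ :=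
  sInf {r | ∃ S : A →L[ℂ] A, IsCompactOperator ⇑S ∧ r = ‖T - S‖}

/-- Let `Ω` be a bounded domain in `ℂⁿ` such that the normalized Bergman kernels `k_z`
(unit vectors) tend weakly to `0` at `bΩ`, and suppose the Berezin boundary-limit
property `lim_{z→p} ψ̃(z) = ψ(p)` holds at every point `p` of a subset `Γ` dense in
`bΩ`.  Then for `ψ ∈ C(Ω̄)` the Toeplitz operator `T_ψ` (whose Berezin transform is
`⟨T_ψ k_z, k_z⟩`) satisfies `‖T_ψ‖_e ≥ sup {|ψ(p)| : p ∈ bΩ}`. -/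
theorem essNorm_toeplitz_ge {n : ℕ} (Ω : Set (Fin n → ℂ)) (hΩ : Bornology.IsBounded Ω)
    {H : Type*} [NormedAddCommGroup H] [InnerProductSpace ℂ H] [CompleteSpace H]
    (k : (Fin n → ℂ) → H) (hk : ∀ z ∈ Ω, ‖k z‖ = 1)
    (hweak : ∀ p ∈ frontier Ω, ∀ f : H,
      Filter.Tendsto (fun z => (⟪k z, f⟫_ℂ : ℂ)) (𝓝[Ω] p) (𝓝 0))
    (Γ : Set (Fin n → ℂ)) (hΓ : Γ ⊆ frontier Ω) (hΓdense : frontier Ω ⊆ closure Γ)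
    (ψ : (Fin n → ℂ) → ℂ) (hψ : ContinuousOn ψ (closure Ω))
    (Tψ : H →L[ℂ] H)
    (hBLP : ∀ p ∈ Γ,
      Filter.Tendsto (fun z => (⟪k z, Tψ (k z)⟫_ℂ : ℂ)) (𝓝[Ω] p) (𝓝 (ψ p))) :
    sSup ((fun p => ‖ψ p‖) '' frontier Ω) ≤ essNorm Tψ := by
  classical
  have hessnn : 0 ≤ essNorm Tψ := by
    apply Real.sInf_nonneg
    rintro r ⟨S, hS, rfl⟩
    exact norm_nonneg _
  -- Step 1: the bound at points of Γ
  have key : ∀ p ∈ Γ, ‖ψ p‖ ≤ essNorm Tψ := by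
    intro p hp
    have hpfr : p ∈ frontier Ω := hΓ hp
    have hpcl : p ∈ closure Ω := frontier_subset_closure hpfr
    have hne : (𝓝[Ω] p).NeBot := mem_closure_iff_nhdsWithin_neBot.mp hpcl
    refine le_csInf ⟨‖Tψ - 0‖, 0, isCompactOperator_zero, rfl⟩ ?_
    rintro r ⟨S, hS, rfl⟩
    -- The compact operator sends k z to 0 in norm
    have hS' : IsCompactOperator ⇑(S : H →ₗ[ℂ] H) := hS
    obtain ⟨K, hK, hKim⟩ := hS'.image_subset_compact_of_bounded
      (Metric.isBounded_closedBall (x := (0 : H)) (r := 1))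
    have hmem : ∀ᶠ z in 𝓝[Ω] p, S (k z) ∈ K := by
      filter_upwards [self_mem_nhdsWithin] with z hz
      exact hKim ⟨k z, by simp [Metric.mem_closedBall, hk z hz], rfl⟩
    have hS0 : Filter.Tendsto (fun z => S (k z)) (𝓝[Ω] p) (𝓝 0) := by
      apply hK.tendsto_nhds_of_unique_mapClusterPt hmem
      intro y hy hcl
      have hinner : ∀ f : H, ⟪f, y⟫_ℂ = 0 := by
        intro f
        have h1 : Filter.Tendsto (fun z => (⟪f, S (k z)⟫_ℂ : ℂ)) (𝓝[Ω] p) (𝓝 0) := by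
          have h2 := (hweak p hpfr (ContinuousLinearMap.adjoint S f))
          have h3 : Filter.Tendsto (fun z =>
              (starRingEnd ℂ) (⟪k z, ContinuousLinearMap.adjoint S f⟫_ℂ))
              (𝓝[Ω] p) (𝓝 ((starRingEnd ℂ) 0)) :=
            ((continuous_star.tendsto 0).comp h2)
          simp only [map_zero] at h3
          convert h3 using 2 with z
          rw [← ContinuousLinearMap.adjoint_inner_left, ← inner_conj_symm]
        have h4 : MapClusterPt (⟪f, y⟫_ℂ : ℂ) (𝓝[Ω] p) (fun z => (⟪f, S (k z)⟫_ℂ : ℂ)) :=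
          hcl.continuousAt_comp ((innerSL ℂ f).continuous.continuousAt)
        have h5 : (𝓝 (⟪f, y⟫_ℂ : ℂ) ⊓ 𝓝 (0 : ℂ)).NeBot :=
          Filter.NeBot.mono h4.clusterPt (inf_le_inf_left _ h1)
        exact eq_of_nhds_neBot h5
      have := hinner y
      rwa [inner_self_eq_zero] at this
    -- Berezin transform of S tends to 0
    have hberS : Filter.Tendsto (fun z => (⟪k z, S (k z)⟫_ℂ : ℂ)) (𝓝[Ω] p) (𝓝 0) := by
      have hnorm : Filter.Tendsto (fun z => ‖S (k z)‖) (𝓝[Ω] p) (𝓝 0) := by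
        simpa using hS0.norm
      apply squeeze_zero_norm' ?_ hnorm
      filter_upwards [self_mem_nhdsWithin] with z hz
      calc ‖(⟪k z, S (k z)⟫_ℂ : ℂ)‖ ≤ ‖k z‖ * ‖S (k z)‖ := norm_inner_le_norm _ _
        _ = ‖S (k z)‖ := by rw [hk z hz, one_mul]
    -- Combine
    have hcomb : Filter.Tendsto (fun z => (⟪k z, (Tψ - S) (k z)⟫_ℂ : ℂ)) (𝓝[Ω] p)
        (𝓝 (ψ p)) := by
      have := (hBLP p hp).sub hberS
      rw [sub_zero] at this
      refine this.congr fun z => ?_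
      simp [ContinuousLinearMap.sub_apply, inner_sub_right]
    have hbd : ∀ᶠ z in 𝓝[Ω] p, ‖(⟪k z, (Tψ - S) (k z)⟫_ℂ : ℂ)‖ ≤ ‖Tψ - S‖ := by
      filter_upwards [self_mem_nhdsWithin] with z hz
      calc ‖(⟪k z, (Tψ - S) (k z)⟫_ℂ : ℂ)‖ ≤ ‖k z‖ * ‖(Tψ - S) (k z)‖ :=
            norm_inner_le_norm _ _
        _ ≤ ‖k z‖ * (‖Tψ - S‖ * ‖k z‖) := by
            gcongr
            exact (Tψ - S).le_opNorm _
        _ = ‖Tψ - S‖ := by rw [hk z hz]; ring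
    exact le_of_tendsto hcomb.norm hbd
  -- Step 2: extend to all of the frontier by density and continuity
  have key2 : ∀ p ∈ frontier Ω, ‖ψ p‖ ≤ essNorm Tψ := by
    intro p hpf
    have hpcl : p ∈ closure Γ := hΓdense hpf
    have hne : (𝓝[Γ] p).NeBot := mem_closure_iff_nhdsWithin_neBot.mp hpcl
    have hΓcl : Γ ⊆ closure Ω := fun q hq => frontier_subset_closure (hΓ hq)
    have hψp : Filter.Tendsto ψ (𝓝[Γ] p) (𝓝 (ψ p)) :=
      (hψ p (frontier_subset_closure hpf)).mono hΓcl
    refine le_of_tendsto hψp.norm ?_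
    filter_upwards [self_mem_nhdsWithin] with q hq
    exact key q hq
  apply Real.sSup_le ?_ hessnn
  rintro x ⟨p, hp, rfl⟩
  exact key2 p hp
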